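/- arXiv:1311.7386 — 4 statements merged into one kernel-verified Lean document; each statement's English description precedes it below -/
import Mathlib

section
/- Let a_1,a_2,a_3, b_1,b_2,b_3 ∈ (0,1) with a_1+a_2+a_3 = b_1+b_2+b_3 = 1, and suppose the multisets {a_1,a_2,a_3} and {b_1,b_2,b_3} are distinct. Set θ_1(q) = log_3(a_1^q+a_2^q+a_3^q) and θ_2(q) = log_3(b_1^q+b_2^q+b_3^q). Then neither the function q ↦ max(θ_1(q), θ_2(q)) nor the function q ↦ min(θ_1(q), θ_2(q)) is real-analytic on ℝ; in fact the graphs of θ_1 and θ_2 cross transversally (with distinct derivatives) at q = 0 or at q = 1. -/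
/-!
Put `Φ(s) = ∑ aᵢ^s - ∑ bⱼ^s`, an exponential sum `∑ c_k exp (r_k s)` with `c_k = ±1` and
exponents `log aᵢ`, `log bⱼ`. If the derivatives of `θ₁` and `θ₂` agree at `0` and at `1`,
then `Φ` has double zeros at `0` and `1`, hence four zeros counted with multiplicity. The
operator `f ↦ f' - μ f` multiplies each `c_k` by `r_k - μ` and, by Rolle's theorem applied to
`exp (-μ s) f s`, loses at most one zero. Applying it for `μ = log a₁, log a₂, log a₃` kills
the `a`-terms and leaves `∑ⱼ P(log bⱼ) bⱼ^s` with a zero, where `P(x) = ∏ᵢ (x - log aᵢ)`.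

On the other hand `∑ a = ∑ b`, and `∏ a = ∏ b` because `Φ'(0) = 0`, so the cubics
`∏ᵢ (t - aᵢ)` and `∏ᵢ (t - bᵢ)` differ by `δ t` for a constant `δ`. As `log` is increasing,
`P(log bⱼ)` has the sign of `∏ᵢ (bⱼ - aᵢ) = δ bⱼ` for every `j`, which forces `δ = 0`; then
the cubics coincide and so do their multisets of roots. At a crossing point with distinct
slopes the max and the min have a corner, so they are not differentiable there.
-/

open Real Set

theorem exists_hasDerivAt_sub_mul_eq_zero {f f' : ℝ → ℝ} {a b : ℝ} (hab : a < b)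
    (hf : ∀ x ∈ Icc a b, HasDerivAt f (f' x) x) (ha : f a = 0) (hb : f b = 0) (μ : ℝ) :
    ∃ ξ ∈ Ioo a b, f' ξ - μ * f ξ = 0 := by
  have hg : ∀ x ∈ Icc a b, HasDerivAt (fun s => exp (-(μ * s)) * f s)
      (exp (-(μ * x)) * (f' x - μ * f x)) x := fun x hx =>
    ((((hasDerivAt_id' x).const_mul μ).neg.exp).mul (hf x hx)).congr_deriv
      (by simp only [Pi.neg_apply]; ring)
  obtain ⟨ξ, hξ, h⟩ := exists_hasDerivAt_eq_zero hab
    (fun x hx => (hg x hx).continuousAt.continuousWithinAt) (by simp [ha, hb])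
    (fun x hx => hg x (Ioo_subset_Icc_self hx))
  exact ⟨ξ, hξ, (mul_eq_zero.mp h).resolve_left (exp_ne_zero _)⟩

section ExpSum

variable {ι : Type*} [Fintype ι]

noncomputable def expSum (c r : ι → ℝ) (s : ℝ) : ℝ :=
  ∑ j, c j * exp (r j * s)

theorem hasDerivAt_expSum (c r : ι → ℝ) (s : ℝ) :
    HasDerivAt (expSum c r) (expSum (fun j => c j * r j) r s) s :=
  HasDerivAt.fun_sum fun j _ =>
    ((((hasDerivAt_id' s).const_mul (r j)).exp).const_mul (c j)).congr_deriv (by ring)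

theorem expSum_mul_sub_mul_expSum (c r : ι → ℝ) (μ s : ℝ) :
    expSum (fun j => c j * r j) r s - μ * expSum c r s
      = expSum (fun j => c j * (r j - μ)) r s := by
  simp only [expSum, Finset.mul_sum, ← Finset.sum_sub_distrib]
  congr 1 with j
  ring

theorem exists_expSum_mul_sub_eq_zero (c r : ι → ℝ) {a b : ℝ} (hab : a < b)
    (ha : expSum c r a = 0) (hb : expSum c r b = 0) (μ : ℝ) :
    ∃ ξ ∈ Ioo a b, expSum (fun j => c j * (r j - μ)) r ξ = 0 := by
  obtain ⟨ξ, hξ, h⟩ := exists_hasDerivAt_sub_mul_eq_zero hab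
    (fun x _ => hasDerivAt_expSum c r x) ha hb μ
  exact ⟨ξ, hξ, expSum_mul_sub_mul_expSum c r μ ξ ▸ h⟩

/-- A case of Descartes' rule of signs for exponential sums: double zeros at `a` and `b` are
four zeros counted with multiplicity, and each of the three Rolle steps loses at most one. -/
theorem exists_expSum_cubic_eq_zero (c r : ι → ℝ) {a b : ℝ} (hab : a < b)
    (ha : expSum c r a = 0) (ha' : expSum (fun j => c j * r j) r a = 0)
    (hb : expSum c r b = 0) (hb' : expSum (fun j => c j * r j) r b = 0) (μ₁ μ₂ μ₃ : ℝ) :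
    ∃ ξ, expSum (fun j => c j * (r j - μ₁) * (r j - μ₂) * (r j - μ₃)) r ξ = 0 := by
  have hdouble : ∀ x, expSum c r x = 0 → expSum (fun j => c j * r j) r x = 0 →
      expSum (fun j => c j * (r j - μ₁)) r x = 0 := fun x h h' => by
    rw [← expSum_mul_sub_mul_expSum, h, h', mul_zero, sub_zero]
  obtain ⟨p, hp, h₁p⟩ := exists_expSum_mul_sub_eq_zero c r hab ha hb μ₁
  obtain ⟨q₁, hq₁, h₂q₁⟩ :=
    exists_expSum_mul_sub_eq_zero _ r hp.1 (hdouble a ha ha') h₁p μ₂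
  obtain ⟨q₂, hq₂, h₂q₂⟩ :=
    exists_expSum_mul_sub_eq_zero _ r hp.2 h₁p (hdouble b hb hb') μ₂
  obtain ⟨ξ, -, h₃ξ⟩ :=
    exists_expSum_mul_sub_eq_zero _ r (hq₁.2.trans hq₂.1) h₂q₁ h₂q₂ μ₃
  exact ⟨ξ, h₃ξ⟩

end ExpSum

theorem log_sub_log_mul_sub_pos {x y : ℝ} (hx : 0 < x) (hy : 0 < y) (hxy : x ≠ y) :
    0 < (log x - log y) * (x - y) := by
  rcases hxy.lt_or_gt with h | h
  · exact mul_pos_of_neg_of_neg (sub_neg.mpr (log_lt_log hx h)) (sub_neg.mpr h)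
  · exact mul_pos (sub_pos.mpr (log_lt_log hy h)) (sub_pos.mpr h)

theorem mul_prod_log_sub_log_pos {ι : Type*} [Fintype ι] {x δ : ℝ} {a : ι → ℝ} (hx : 0 < x)
    (ha : ∀ i, 0 < a i) (h : 0 < δ * ∏ i, (x - a i)) :
    0 < δ * ∏ i, (log x - log (a i)) := by
  have hne : ∀ i, x ≠ a i := fun i hi => by
    rw [Finset.prod_eq_zero (Finset.mem_univ i) (sub_eq_zero.mpr hi), mul_zero] at h
    exact h.false
  have hlog : 0 < (∏ i, (log x - log (a i))) * ∏ i, (x - a i) := by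
    rw [← Finset.prod_mul_distrib]
    exact Finset.prod_pos fun i _ => log_sub_log_mul_sub_pos hx (ha i) (hne i)
  have := mul_pos h hlog
  nlinarith [sq_nonneg (∏ i, (x - a i))]

section Roots

open Polynomial

theorem map_univ_eq_of_prod_sub_eq {ι : Type*} [Fintype ι] {a b : ι → ℝ}
    (h : ∀ t, ∏ i, (t - a i) = ∏ i, (t - b i)) :
    Finset.univ.val.map a = Finset.univ.val.map b := by
  have hroots : ∀ f : ι → ℝ, (∏ i, (X - C (f i))).roots = Finset.univ.val.map f :=
      fun f => by
    rw [Finset.prod_eq_multiset_prod,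
      ← roots_multiset_prod_X_sub_C (Finset.univ.val.map f), Multiset.map_map]
    rfl
  have hpoly : ∏ i, (X - C (a i)) = ∏ i, (X - C (b i)) :=
    Polynomial.funext fun t => by simpa [eval_prod] using h t
  rw [← hroots a, ← hroots b, hpoly]

end Roots

theorem exists_prod_sub_eq_prod_sub_add (a b : Fin 3 → ℝ) (hs : ∑ i, a i = ∑ i, b i)
    (hp : ∏ i, a i = ∏ i, b i) : ∃ δ, ∀ t, ∏ i, (t - a i) = ∏ i, (t - b i) + δ * t := by
  refine ⟨a 0 * a 1 + a 0 * a 2 + a 1 * a 2 - (b 0 * b 1 + b 0 * b 2 + b 1 * b 2), fun t => ?_⟩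
  simp only [Fin.sum_univ_three, Fin.prod_univ_three] at hs hp ⊢
  linear_combination (-t ^ 2) * hs - hp

theorem exists_sum_prod_log_sub_log_mul_exp_eq_zero (a b : Fin 3 → ℝ) (ha : ∀ i, 0 < a i)
    (hb : ∀ i, 0 < b i) (hs : ∑ i, a i = ∑ i, b i) (hlog : ∑ i, log (a i) = ∑ i, log (b i))
    (hxlog : ∑ i, a i * log (a i) = ∑ i, b i * log (b i)) :
    ∃ ξ, ∑ j, (∏ i, (log (b j) - log (a i))) * exp (log (b j) * ξ) = 0 := by
  set c : Fin 3 ⊕ Fin 3 → ℝ := Sum.elim 1 (-1)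
  set r : Fin 3 ⊕ Fin 3 → ℝ := Sum.elim (fun i => log (a i)) fun i => log (b i)
  have h0 : expSum c r 0 = 0 := by simp [expSum, c, r]
  have h0' : expSum (fun j => c j * r j) r 0 = 0 := by simp [expSum, c, r, hlog]
  have h1 : expSum c r 1 = 0 := by simp [expSum, c, r, exp_log (ha _), exp_log (hb _), hs]
  have h1' : expSum (fun j => c j * r j) r 1 = 0 := by
    simp [expSum, c, r, exp_log (ha _), exp_log (hb _), mul_comm (log _), hxlog]
  obtain ⟨ξ, hξ⟩ := exists_expSum_cubic_eq_zero c r zero_lt_one h0 h0' h1 h1'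
    (log (a 0)) (log (a 1)) (log (a 2))
  have hkill : ∀ i,
      (log (a i) - log (a 0)) * (log (a i) - log (a 1)) * (log (a i) - log (a 2)) = 0 := by
    intro i
    fin_cases i <;> simp
  rw [expSum, Fintype.sum_sum_type] at hξ
  simp only [c, r, Sum.elim_inl, Sum.elim_inr, Pi.one_apply, Pi.neg_apply, one_mul, hkill,
    zero_mul, Finset.sum_const_zero, zero_add, neg_mul, Finset.sum_neg_distrib,
    neg_eq_zero] at hξ
  simpa only [Fin.prod_univ_three] using ⟨ξ, hξ⟩

theorem map_univ_eq_of_sum_log_eq (a b : Fin 3 → ℝ) (ha : ∀ i, 0 < a i) (hb : ∀ i, 0 < b i)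
    (hs : ∑ i, a i = ∑ i, b i) (hlog : ∑ i, log (a i) = ∑ i, log (b i))
    (hxlog : ∑ i, a i * log (a i) = ∑ i, b i * log (b i)) :
    Finset.univ.val.map a = Finset.univ.val.map b := by
  have hp : ∏ i, a i = ∏ i, b i := by
    rw [← Finset.prod_congr rfl fun i _ => exp_log (ha i),
      ← Finset.prod_congr rfl fun i _ => exp_log (hb i), ← exp_sum, ← exp_sum, hlog]
  obtain ⟨δ, hδ⟩ := exists_prod_sub_eq_prod_sub_add a b hs hp
  suffices δ = 0 from map_univ_eq_of_prod_sub_eq fun t => by simpa [this] using hδ t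
  by_contra hδ0
  obtain ⟨ξ, hξ⟩ := exists_sum_prod_log_sub_log_mul_exp_eq_zero a b ha hb hs hlog hxlog
  have hterm : ∀ j, 0 < δ * ∏ i, (log (b j) - log (a i)) := fun j => by
    refine mul_prod_log_sub_log_pos (hb j) ha ?_
    rw [hδ, Finset.prod_eq_zero (Finset.mem_univ j) (sub_self _), zero_add, ← mul_assoc]
    exact mul_pos (mul_self_pos.mpr hδ0) (hb j)
  have hpos : 0 < δ * ∑ j, (∏ i, (log (b j) - log (a i))) * exp (log (b j) * ξ) := by
    rw [Finset.mul_sum]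
    exact Finset.sum_pos (fun j _ => by rw [← mul_assoc]; exact mul_pos (hterm j) (exp_pos _))
      Finset.univ_nonempty
  rw [hξ, mul_zero] at hpos
  exact hpos.false

theorem not_differentiableAt_max {f g : ℝ → ℝ} {p : ℝ} (hf : DifferentiableAt ℝ f p)
    (hg : DifferentiableAt ℝ g p) (hfg : f p = g p) (h : deriv f p ≠ deriv g p) :
    ¬ DifferentiableAt ℝ (fun x => max (f x) (g x)) p := by
  intro hm
  have hderiv : ∀ k : ℝ → ℝ, k p = max (f p) (g p) → (∀ x, k x ≤ max (f x) (g x)) →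
      DifferentiableAt ℝ k p → deriv (fun x => max (f x) (g x)) p = deriv k p := by
    intro k hkp hk hkd
    have hloc : IsLocalMin (fun x => max (f x) (g x) - k x) p :=
      Filter.Eventually.of_forall fun x => by simp only [hkp, sub_self, sub_nonneg, hk]
    exact sub_eq_zero.mp (hloc.hasDerivAt_eq_zero (hm.hasDerivAt.sub hkd.hasDerivAt))
  exact h ((hderiv f (by simp [hfg]) (fun x => le_max_left _ _) hf).symm.trans
    (hderiv g (by simp [hfg]) (fun x => le_max_right _ _) hg))

theorem not_differentiableAt_min {f g : ℝ → ℝ} {p : ℝ} (hf : DifferentiableAt ℝ f p)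
    (hg : DifferentiableAt ℝ g p) (hfg : f p = g p) (h : deriv f p ≠ deriv g p) :
    ¬ DifferentiableAt ℝ (fun x => min (f x) (g x)) p := by
  intro hm
  have hneg : (fun x => max ((-f) x) ((-g) x)) = -fun x => min (f x) (g x) := by
    funext x
    simp [max_neg_neg]
  exact not_differentiableAt_max hf.neg hg.neg (by simp [hfg]) (by simpa [deriv.neg] using h)
    (hneg ▸ hm.neg)

theorem hasDerivAt_logb_sum_rpow {ι : Type*} [Fintype ι] [Nonempty ι] (B : ℝ) {a : ι → ℝ}
    (ha : ∀ i, 0 < a i) (q : ℝ) :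
    HasDerivAt (fun q => logb B (∑ i, a i ^ q))
      ((∑ i, a i ^ q * log (a i)) / (∑ i, a i ^ q) / log B) q := by
  have hsum : HasDerivAt (fun q => ∑ i, a i ^ q) (∑ i, a i ^ q * log (a i)) q :=
    HasDerivAt.fun_sum fun i _ => (hasStrictDerivAt_const_rpow (ha i) q).hasDerivAt
  have hpos : 0 < ∑ i, a i ^ q :=
    Finset.sum_pos (fun i _ => rpow_pos_of_pos (ha i) q) Finset.univ_nonempty
  simpa only [logb] using (hsum.log hpos.ne').div_const (log B)

/-- Corollary 9 of the paper: for two distinct trinomial weight systems, neither the max nor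
the min of `θ_1(q) = log_3(a_1^q+a_2^q+a_3^q)` and `θ_2(q) = log_3(b_1^q+b_2^q+b_3^q)` is
real-analytic on `ℝ`; in fact the graphs cross transversally at `q = 0` or at `q = 1`. -/
theorem trinomial_not_analytic (a b : Fin 3 → ℝ)
    (ha : ∀ i, a i ∈ Set.Ioo (0 : ℝ) 1) (hb : ∀ i, b i ∈ Set.Ioo (0 : ℝ) 1)
    (hsa : ∑ i, a i = 1) (hsb : ∑ i, b i = 1)
    (hne : Multiset.map a Finset.univ.val ≠ Multiset.map b Finset.univ.val) :
    (¬ AnalyticOnNhd ℝ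
        (fun q : ℝ => max (Real.logb 3 (∑ i, a i ^ q)) (Real.logb 3 (∑ i, b i ^ q)))
        Set.univ) ∧
    (¬ AnalyticOnNhd ℝ
        (fun q : ℝ => min (Real.logb 3 (∑ i, a i ^ q)) (Real.logb 3 (∑ i, b i ^ q)))
        Set.univ) ∧
    (deriv (fun q : ℝ => Real.logb 3 (∑ i, a i ^ q)) 0
        ≠ deriv (fun q : ℝ => Real.logb 3 (∑ i, b i ^ q)) 0 ∨
      deriv (fun q : ℝ => Real.logb 3 (∑ i, a i ^ q)) 1
        ≠ deriv (fun q : ℝ => Real.logb 3 (∑ i, b i ^ q)) 1) := by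
  have ha₀ : ∀ i, 0 < a i := fun i => (ha i).1
  have hb₀ : ∀ i, 0 < b i := fun i => (hb i).1
  have hda := hasDerivAt_logb_sum_rpow 3 ha₀
  have hdb := hasDerivAt_logb_sum_rpow 3 hb₀
  have hcross : deriv (fun q : ℝ => logb 3 (∑ i, a i ^ q)) 0
        ≠ deriv (fun q : ℝ => logb 3 (∑ i, b i ^ q)) 0 ∨
      deriv (fun q : ℝ => logb 3 (∑ i, a i ^ q)) 1
        ≠ deriv (fun q : ℝ => logb 3 (∑ i, b i ^ q)) 1 := by
    by_contra! h
    rw [(hda 0).deriv, (hdb 0).deriv, (hda 1).deriv, (hdb 1).deriv] at h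
    simp only [rpow_zero, rpow_one, one_mul, hsa, hsb, div_one,
      div_left_inj' (log_pos (by norm_num : (1 : ℝ) < 3)).ne', Finset.sum_const,
      Finset.card_univ, Fintype.card_fin] at h
    exact hne (map_univ_eq_of_sum_log_eq a b ha₀ hb₀ (hsa.trans hsb.symm)
      ((div_left_inj' (by norm_num)).mp h.1) h.2)
  obtain ⟨p, hp, hdp⟩ : ∃ p, logb 3 (∑ i, a i ^ p) = logb 3 (∑ i, b i ^ p) ∧
      deriv (fun q : ℝ => logb 3 (∑ i, a i ^ q)) p
        ≠ deriv (fun q : ℝ => logb 3 (∑ i, b i ^ q)) p := by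
    rcases hcross with h | h
    · exact ⟨0, by simp, h⟩
    · exact ⟨1, by simp [hsa, hsb], h⟩
  exact ⟨fun h => not_differentiableAt_max (hda p).differentiableAt (hdb p).differentiableAt
      hp hdp (h p trivial).differentiableAt,
    fun h => not_differentiableAt_min (hda p).differentiableAt (hdb p).differentiableAt
      hp hdp (h p trivial).differentiableAt, hcross⟩
end

section
/- There exist a_1,a_2,a_3,a_4, b_1,b_2,b_3,b_4 ∈ (0,1) such that a_1+a_2+a_3+a_4 = b_1+b_2+b_3+b_4 = 1, the multisets {a_1,a_2,a_3,a_4} and {b_1,b_2,b_3,b_4} are distinct, and θ(a;0) = θ(b;0), θ(a;1) = θ(b;1), θ'(a;0) = θ'(b;0), θ'(a;1) = θ'(b;1); equivalently, in addition to the sum conditions, Σ_{j=1}^4 log a_j = Σ_{j=1}^4 log b_j and Σ_{j=1}^4 a_j log a_j = Σ_{j=1}^4 b_j log b_j. -/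
open MeasureTheory Metric Filter Set ENNReal

/-- Theorem 10 of the paper: there exist two distinct quadrinomial weight systems `(a_j)`,
`(b_j)` summing to `1` with `θ(a;0) = θ(b;0)`, `θ(a;1) = θ(b;1)`, `θ'(a;0) = θ'(b;0)` and
`θ'(a;1) = θ'(b;1)`; equivalently `Σ log a_j = Σ log b_j` and `Σ a_j log a_j = Σ b_j log b_j`. -/
theorem exists_tangent_weights :
    ∃ a b : Fin 4 → ℝ,
      (∀ i, a i ∈ Set.Ioo (0 : ℝ) 1) ∧ (∀ i, b i ∈ Set.Ioo (0 : ℝ) 1) ∧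
      ∑ i, a i = 1 ∧ ∑ i, b i = 1 ∧
      Multiset.map a Finset.univ.val ≠ Multiset.map b Finset.univ.val ∧
      ∑ i, Real.log (a i) = ∑ i, Real.log (b i) ∧
      ∑ i, a i * Real.log (a i) = ∑ i, b i * Real.log (b i) := by
  refine ⟨![5/130, 27/130, 28/130, 70/130], ![6/130, 15/130, 49/130, 60/130], ?_, ?_, ?_, ?_, ?_, ?_, ?_⟩
  · intro i; fin_cases i <;> constructor <;> norm_num
  · intro i; fin_cases i <;> constructor <;> norm_num
  · simp [Fin.sum_univ_four]; norm_num
  · simp [Fin.sum_univ_four]; norm_num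
  · intro h
    have h5 : ((5:ℝ)/130) ∈ Multiset.map ![(5:ℝ)/130, 27/130, 28/130, 70/130] Finset.univ.val :=
      Multiset.mem_map.mpr ⟨0, Finset.mem_val.mpr (Finset.mem_univ 0), rfl⟩
    rw [h] at h5
    obtain ⟨i, -, hi⟩ := Multiset.mem_map.mp h5
    fin_cases i <;> norm_num at hi
  all_goals {
    have l130 : Real.log 130 = Real.log 2 + Real.log 5 + Real.log 13 := by
      rw [show (130:ℝ) = 2*5*13 by norm_num, Real.log_mul (by norm_num) (by norm_num),
        Real.log_mul (by norm_num) (by norm_num)]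
    have l27 : Real.log 27 = 3 * Real.log 3 := by
      rw [show (27:ℝ) = 3^3 by norm_num, Real.log_pow]; push_cast; ring
    have l28 : Real.log 28 = 2 * Real.log 2 + Real.log 7 := by
      rw [show (28:ℝ) = 2^2*7 by norm_num, Real.log_mul (by norm_num) (by norm_num),
        Real.log_pow]; push_cast; ring
    have l70 : Real.log 70 = Real.log 2 + Real.log 5 + Real.log 7 := by
      rw [show (70:ℝ) = 2*5*7 by norm_num, Real.log_mul (by norm_num) (by norm_num),
        Real.log_mul (by norm_num) (by norm_num)]
    have l6 : Real.log 6 = Real.log 2 + Real.log 3 := by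
      rw [show (6:ℝ) = 2*3 by norm_num, Real.log_mul (by norm_num) (by norm_num)]
    have l15 : Real.log 15 = Real.log 3 + Real.log 5 := by
      rw [show (15:ℝ) = 3*5 by norm_num, Real.log_mul (by norm_num) (by norm_num)]
    have l49 : Real.log 49 = 2 * Real.log 7 := by
      rw [show (49:ℝ) = 7^2 by norm_num, Real.log_pow]; push_cast; ring
    have l60 : Real.log 60 = 2 * Real.log 2 + Real.log 3 + Real.log 5 := by
      rw [show (60:ℝ) = 2^2*3*5 by norm_num, Real.log_mul (by norm_num) (by norm_num),
        Real.log_mul (by norm_num) (by norm_num), Real.log_pow]; push_cast; ring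
    simp only [Fin.sum_univ_four, Matrix.cons_val_zero, Matrix.cons_val_one, Matrix.head_cons,
      Matrix.cons_val_two, Matrix.tail_cons, Matrix.cons_val_three]
    rw [Real.log_div (by norm_num) (by norm_num), Real.log_div (by norm_num) (by norm_num),
      Real.log_div (by norm_num) (by norm_num), Real.log_div (by norm_num) (by norm_num),
      Real.log_div (by norm_num) (by norm_num), Real.log_div (by norm_num) (by norm_num),
      Real.log_div (by norm_num) (by norm_num), Real.log_div (by norm_num) (by norm_num),
      l130, l27, l28, l70, l6, l15, l49, l60]
    ring }
end

section
/- Let 0 < a_1 < a_2 < a_3 < a_4 < 1 with a_1+a_2+a_3+a_4 = 1. Then for every α ∈ (−log_4 a_4, −log_4 a_1) there exist ã_1, ã_2, ã_3, ã_4 ∈ (0,1) such that ã_1+ã_2+ã_3+ã_4 = 1, −Σ_{i=1}^4 ã_i log_4 a_i = α, and log(ã_2/ã_1)/log(a_2/a_1) = log(ã_3/ã_1)/log(a_3/a_1) = log(ã_4/ã_1)/log(a_4/a_1). -/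
/-!
The weights are the escort distribution `ãᵢ = aᵢ ^ s / ∑ⱼ aⱼ ^ s` for a suitable real `s`.
For every `s` one has `log (ãᵢ / ã₁) = s log (aᵢ / a₁)`, so all three ratios equal `s`.
The escort distribution concentrates on the largest `aᵢ` as `s → ∞` and on the smallest as
`s → -∞`, so the continuous function `s ↦ -∑ ãᵢ log₄ aᵢ` tends to `-log₄ a₄` and `-log₄ a₁`, and
the intermediate value theorem attains every `α` in between.
-/

open Filter Set Topology

section Escort

variable {ι : Type*} [Fintype ι]

noncomputable def escort (a : ι → ℝ) (s : ℝ) (i : ι) : ℝ :=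
  a i ^ s / ∑ j, a j ^ s

lemma sum_rpow_pos [Nonempty ι] {a : ι → ℝ} (ha : ∀ i, 0 < a i) (s : ℝ) :
    0 < ∑ i, a i ^ s :=
  Finset.sum_pos (fun i _ => Real.rpow_pos_of_pos (ha i) s) Finset.univ_nonempty

lemma escort_pos {a : ι → ℝ} (ha : ∀ i, 0 < a i) (s : ℝ) (i : ι) : 0 < escort a s i :=
  have : Nonempty ι := ⟨i⟩
  div_pos (Real.rpow_pos_of_pos (ha i) s) (sum_rpow_pos ha s)

lemma sum_escort [Nonempty ι] {a : ι → ℝ} (ha : ∀ i, 0 < a i) (s : ℝ) :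
    ∑ i, escort a s i = 1 := by
  simp only [escort, ← Finset.sum_div, div_self (sum_rpow_pos ha s).ne']

lemma escort_lt_one [Nontrivial ι] {a : ι → ℝ} (ha : ∀ i, 0 < a i) (s : ℝ) (i : ι) :
    escort a s i < 1 := by
  obtain ⟨j, hji⟩ := exists_ne i
  rw [escort, div_lt_one (sum_rpow_pos ha s)]
  exact Finset.single_lt_sum hji (Finset.mem_univ i) (Finset.mem_univ j)
    (Real.rpow_pos_of_pos (ha j) s) fun k _ _ => (Real.rpow_pos_of_pos (ha k) s).le

lemma escort_div_escort {a : ι → ℝ} (ha : ∀ i, 0 < a i) (s : ℝ) (i j : ι) :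
    escort a s i / escort a s j = (a i / a j) ^ s := by
  have : Nonempty ι := ⟨i⟩
  have hj := (Real.rpow_pos_of_pos (ha j) s).ne'
  have hsum := (sum_rpow_pos ha s).ne'
  rw [escort, escort, Real.div_rpow (ha i).le (ha j).le]
  field_simp

lemma log_escort_div_escort_div_log {a : ι → ℝ} (ha : ∀ i, 0 < a i) (s : ℝ) {i j : ι}
    (hij : a i ≠ a j) :
    Real.log (escort a s i / escort a s j) / Real.log (a i / a j) = s := by
  have hlog : Real.log (a i / a j) ≠ 0 := by
    rw [Real.log_div (ha i).ne' (ha j).ne', sub_ne_zero]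
    exact fun h => hij (Real.log_injOn_pos (ha i) (ha j) h)
  rw [escort_div_escort ha, Real.log_rpow (div_pos (ha i) (ha j)), mul_div_cancel_right₀ _ hlog]

lemma continuous_escort {a : ι → ℝ} (ha : ∀ i, 0 < a i) (i : ι) :
    Continuous fun s => escort a s i := by
  have : Nonempty ι := ⟨i⟩
  have hpow : ∀ j, Continuous fun s : ℝ => a j ^ s := fun j =>
    continuous_const.rpow continuous_id fun _ => Or.inl (ha j).ne'
  exact (hpow i).div (continuous_finsetSum _ fun j _ => hpow j)
    fun s => (sum_rpow_pos ha s).ne'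

lemma escort_div_const {a : ι → ℝ} (ha : ∀ i, 0 ≤ a i) {c : ℝ} (hc : 0 < c) (s : ℝ) :
    escort (fun i => a i / c) s = escort a s := by
  have hcs := (Real.rpow_pos_of_pos hc s).ne'
  ext i
  simp only [escort, Real.div_rpow (ha _) hc.le, ← Finset.sum_div]
  exact div_div_div_cancel_right₀ hcs _ _

lemma escort_inv {a : ι → ℝ} (ha : ∀ i, 0 ≤ a i) (s : ℝ) :
    escort (fun i => (a i)⁻¹) s = escort a (-s) := by
  ext i
  simp only [escort, Real.inv_rpow (ha _), Real.rpow_neg (ha _)]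

lemma tendsto_escort_atTop [DecidableEq ι] {a : ι → ℝ} (ha : ∀ i, 0 < a i) {M : ι}
    (hM : ∀ i ≠ M, a i < a M) (i : ι) :
    Tendsto (fun s => escort a s i) atTop (𝓝 (if i = M then 1 else 0)) := by
  -- after dividing by `a M`, the base at `M` is `1` and every other base is below `1`
  have hpow : ∀ j, Tendsto (fun s : ℝ => (a j / a M) ^ s) atTop
      (𝓝 (if j = M then 1 else 0)) := by
    intro j
    split_ifs with hj
    · subst hj
      simp only [div_self (ha j).ne', Real.one_rpow, tendsto_const_nhds]
    · exact tendsto_rpow_atTop_of_base_lt_one _ (by linarith [div_pos (ha j) (ha M)])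
        ((div_lt_one (ha M)).mpr (hM j hj))
  have hsum : Tendsto (fun s : ℝ => ∑ j, (a j / a M) ^ s) atTop (𝓝 1) := by
    simpa only [Finset.sum_ite_eq', Finset.mem_univ, if_true] using
      tendsto_finsetSum Finset.univ fun j _ => hpow j
  simp_rw [← escort_div_const (fun j => (ha j).le) (ha M)]
  simpa only [escort, Pi.div_def, div_one] using (hpow i).div hsum one_ne_zero

lemma tendsto_escort_atBot [DecidableEq ι] {a : ι → ℝ} (ha : ∀ i, 0 < a i) {m : ι}
    (hm : ∀ i ≠ m, a m < a i) (i : ι) :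
    Tendsto (fun s => escort a s i) atBot (𝓝 (if i = m then 1 else 0)) := by
  have hinv := tendsto_escort_atTop (fun j => inv_pos.mpr (ha j))
    (fun j hj => (inv_lt_inv₀ (ha j) (ha m)).mpr (hm j hj)) i
  simp_rw [escort_inv (fun j => (ha j).le)] at hinv
  simpa only [Function.comp_def, neg_neg] using hinv.comp tendsto_neg_atBot_atTop

lemma tendsto_sum_mul_of_tendsto_ite [DecidableEq ι] {l : Filter ℝ} {w : ℝ → ι → ℝ} {m : ι}
    (hw : ∀ i, Tendsto (fun s => w s i) l (𝓝 (if i = m then 1 else 0))) (x : ι → ℝ) :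
    Tendsto (fun s => ∑ i, w s i * x i) l (𝓝 (x m)) := by
  simpa only [ite_mul, one_mul, zero_mul, Finset.sum_ite_eq', Finset.mem_univ, if_true] using
    tendsto_finsetSum Finset.univ fun i _ => (hw i).mul_const (x i)

lemma exists_sum_escort_mul_eq [DecidableEq ι] {a : ι → ℝ} (ha : ∀ i, 0 < a i) {m M : ι}
    (hm : ∀ i ≠ m, a m < a i) (hM : ∀ i ≠ M, a i < a M) (x : ι → ℝ) {c : ℝ}
    (hc : c ∈ Ioo (x m) (x M)) :
    ∃ s, ∑ i, escort a s i * x i = c := by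
  have hcont : Continuous fun s => ∑ i, escort a s i * x i :=
    continuous_finsetSum _ fun i _ => (continuous_escort ha i).mul continuous_const
  have hbot := tendsto_sum_mul_of_tendsto_ite (m := m) (tendsto_escort_atBot ha hm) x
  have htop := tendsto_sum_mul_of_tendsto_ite (m := M) (tendsto_escort_atTop ha hM) x
  exact mem_range_of_exists_le_of_exists_ge hcont
    ((hbot.eventually (gt_mem_nhds hc.1)).exists.imp fun _ => le_of_lt)
    ((htop.eventually (lt_mem_nhds hc.2)).exists.imp fun _ => le_of_lt)

end Escort

theorem exists_auxiliary_weights_general (a : Fin 4 → ℝ) (hmono : StrictMono a)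
    (h0 : 0 < a 0)
    (α : ℝ) (hα : α ∈ Set.Ioo (-Real.logb 4 (a 3)) (-Real.logb 4 (a 0))) :
    ∃ ta : Fin 4 → ℝ,
      (∀ i, ta i ∈ Set.Ioo (0 : ℝ) 1) ∧ ∑ i, ta i = 1 ∧
      -(∑ i, ta i * Real.logb 4 (a i)) = α ∧
      Real.log (ta 1 / ta 0) / Real.log (a 1 / a 0)
        = Real.log (ta 2 / ta 0) / Real.log (a 2 / a 0) ∧
      Real.log (ta 2 / ta 0) / Real.log (a 2 / a 0)
        = Real.log (ta 3 / ta 0) / Real.log (a 3 / a 0) := by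
  have ha : ∀ i, 0 < a i := fun i => h0.trans_le (hmono.monotone (Fin.zero_le i))
  obtain ⟨s, hs⟩ := exists_sum_escort_mul_eq ha (m := 0) (M := 3)
    (fun i hi => hmono (by omega)) (fun i hi => hmono (by omega)) (fun i => Real.logb 4 (a i))
    (c := -α) ⟨by linarith [hα.2], by linarith [hα.1]⟩
  have hratio : ∀ i : Fin 4, i ≠ 0 →
      Real.log (escort a s i / escort a s 0) / Real.log (a i / a 0) = s :=
    fun i hi => log_escort_div_escort_div_log ha s (hmono.injective.ne hi)
  refine ⟨escort a s, fun i => ⟨escort_pos ha s i, escort_lt_one ha s i⟩, sum_escort ha s,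
    by rw [hs, neg_neg], ?_, ?_⟩ <;>
  rw [hratio _ (by decide), hratio _ (by decide)]

/-- Lemma 12 of the paper: for `0 < a_1 < a_2 < a_3 < a_4 < 1` summing to `1` and any
`α ∈ (-log_4 a_4, -log_4 a_1)` there are weights `ã_i ∈ (0,1)` summing to `1` with
`-Σ ã_i log_4 a_i = α` and `log(ã_i/ã_1)/log(a_i/a_1)` independent of `i = 2,3,4`. -/
theorem exists_auxiliary_weights (a : Fin 4 → ℝ) (hmono : StrictMono a)
    (h0 : 0 < a 0) (h1 : a 3 < 1) (hsum : ∑ i, a i = 1)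
    (α : ℝ) (hα : α ∈ Set.Ioo (-Real.logb 4 (a 3)) (-Real.logb 4 (a 0))) :
    ∃ ta : Fin 4 → ℝ,
      (∀ i, ta i ∈ Set.Ioo (0 : ℝ) 1) ∧ ∑ i, ta i = 1 ∧
      -(∑ i, ta i * Real.logb 4 (a i)) = α ∧
      Real.log (ta 1 / ta 0) / Real.log (a 1 / a 0)
        = Real.log (ta 2 / ta 0) / Real.log (a 2 / a 0) ∧
      Real.log (ta 2 / ta 0) / Real.log (a 2 / a 0)
        = Real.log (ta 3 / ta 0) / Real.log (a 3 / a 0) :=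
  exists_auxiliary_weights_general a hmono h0 α hα
end

section
/- Let c ≥ 2, A = {0,…,c−1}, and n ≥ 1. For a word w = ε_1…ε_n ∈ A^n let ι(w) = Σ_{j=0}^{n−1} ε_{n−j} c^j, and let g(w) be the word of length n whose j-th letter is ε_j − ε_{j−1} mod c (with ε_0 := 0). If w, v ∈ A^n are contiguous under the natural enumeration, i.e. ι(v) = ι(w) + 1, then the words g(w) and g(v) differ in exactly one position. -/
open MeasureTheory Metric Filter Set ENNReal

/-- The natural enumeration `ι(w) = Σ_{j=0}^{n-1} ε_{n-j} c^j` of words of length `n`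
(reading `w` as the base-`c` expansion of an integer). Here `w i` is the letter `ε_{i+1}`. -/
def iotaWord {c n : ℕ} (w : Fin n → Fin c) : ℕ :=
  ∑ j : Fin n, (w j : ℕ) * c ^ (n - 1 - (j : ℕ))

/-- The generalized Gray code on finite words: the `j`-th letter of `g(ε_1 … ε_n)` is
`ε_j - ε_{j-1} (mod c)`, with `ε_0 := 0`. -/
def grayWord {c n : ℕ} (w : Fin n → Fin c) : Fin n → Fin c := fun j =>
  if _ : (j : ℕ) = 0 then w j
  else w j - w ⟨(j : ℕ) - 1, by have := j.isLt; omega⟩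

/-! Adding `1` to a base-`c` numeral raises its last letter below `c - 1` by one and turns the
trailing block of `c - 1`'s into `0`'s; modulo `c` this adds `1` to every letter from some position
`M` on. The Gray code is additive, and it sends the indicator of `[M, n)` to the indicator of `{M}`,
so `g(v) = g(w) + δ_M`. -/

theorem Nat.eq_add_div_and_eq_mod_of_mul_add_eq {c x y a b : ℕ} (h : c * y + b = c * x + a)
    (hb : b < c) : y = x + a / c ∧ b = a % c := by
  obtain ⟨hy, hb⟩ := (Nat.div_mod_unique (by omega)).2 ⟨(add_comm _ _).trans h, hb⟩
  rw [Nat.mul_add_div (by omega)] at hy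
  rw [Nat.mul_add_mod] at hb
  exact ⟨hy.symm, hb.symm⟩

theorem iotaWord_eq_mul_init_add_last {c n : ℕ} (w : Fin (n + 1) → Fin c) :
    iotaWord w = c * iotaWord (Fin.init w) + w (Fin.last n) := by
  simp only [iotaWord, Fin.sum_univ_castSucc, Finset.mul_sum, Fin.init, Fin.val_last,
    Nat.add_sub_cancel, Nat.sub_self, pow_zero, mul_one, Fin.val_castSucc]
  congr 1
  refine Finset.sum_congr rfl fun j _ => ?_
  rw [show n - j = (n - 1 - j) + 1 by omega, pow_succ]
  ring

theorem iotaWord_injective {c n : ℕ} : Function.Injective (iotaWord : (Fin n → Fin c) → ℕ) := by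
  induction n with
  | zero => intro w v _; exact funext fun j => j.elim0
  | succ n ih =>
    intro w v h
    rw [iotaWord_eq_mul_init_add_last, iotaWord_eq_mul_init_add_last] at h
    obtain ⟨hinit, hlast⟩ := Nat.eq_add_div_and_eq_mod_of_mul_add_eq h.symm (v _).isLt
    rw [Nat.div_eq_of_lt (w _).isLt, add_zero] at hinit
    rw [Nat.mod_eq_of_lt (w _).isLt] at hlast
    rw [← Fin.snoc_init_self w, ← Fin.snoc_init_self v, ih hinit, Fin.ext hlast]

theorem exists_eq_add_indicator_Ici_of_iotaWord_eq_add_one {c n : ℕ} [NeZero c]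
    {w v : Fin n → Fin c} (h : iotaWord v = iotaWord w + 1) :
    ∃ M : Fin n, v = w + (Set.Ici M).indicator 1 := by
  induction n with
  | zero => simp [iotaWord] at h
  | succ n ih =>
    rw [iotaWord_eq_mul_init_add_last, iotaWord_eq_mul_init_add_last, add_assoc] at h
    obtain ⟨hinit, hlast⟩ := Nat.eq_add_div_and_eq_mod_of_mul_add_eq h (v _).isLt
    have hv_last : v (Fin.last n) = w (Fin.last n) + 1 :=
      Fin.ext (by rw [Fin.val_add, Fin.val_one', Nat.add_mod_mod, hlast])
    rcases Nat.lt_or_ge ((w (Fin.last n) : ℕ) + 1) c with hlt | hge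
    · rw [Nat.div_eq_of_lt hlt, add_zero] at hinit
      refine ⟨Fin.last n, funext (Fin.lastCases ?_ fun i => ?_)⟩
      · simp [hv_last]
      · have hi : v i.castSucc = w i.castSucc := congrFun (iotaWord_injective hinit) i
        simp [hi]
    · have hcarry : ((w (Fin.last n) : ℕ) + 1) / c = 1 := by
        rw [show (w (Fin.last n) : ℕ) + 1 = c by have := (w (Fin.last n)).isLt; omega]
        exact Nat.div_self (NeZero.pos c)
      obtain ⟨M, hM⟩ := ih (hinit.trans (by rw [hcarry]))
      refine ⟨M.castSucc, funext (Fin.lastCases ?_ fun i => ?_)⟩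
      · simp [hv_last, (Fin.castSucc_lt_last M).le]
      · have hi : v i.castSucc = w i.castSucc + (Set.Ici M).indicator 1 i := congrFun hM i
        simpa [Set.indicator_apply] using hi

theorem grayWord_add {c n : ℕ} [NeZero c] (w u : Fin n → Fin c) :
    grayWord (w + u) = grayWord w + grayWord u := by
  funext j
  simp only [grayWord, Pi.add_apply]
  split_ifs
  · rfl
  · exact add_sub_add_comm (w j) (u j) _ _

theorem grayWord_indicator_Ici {c n : ℕ} [NeZero c] (M : Fin n) :
    grayWord ((Set.Ici M).indicator 1) = Pi.single M (1 : Fin c) := by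
  funext j
  simp only [grayWord, Set.indicator_apply, Set.mem_Ici, Pi.one_apply, Pi.single_apply,
    Fin.le_def, Fin.ext_iff]
  split_ifs <;> first | omega | simp

theorem grayWord_contiguous_differ_one_general (c n : ℕ) (hc : 2 ≤ c)
    (w v : Fin n → Fin c) (hcontig : iotaWord v = iotaWord w + 1) :
    (Finset.univ.filter fun j : Fin n => grayWord w j ≠ grayWord v j).card = 1 := by
  have : NeZero c := ⟨by omega⟩
  have hone : (1 : Fin c) ≠ 0 := Fin.one_eq_zero_iff.not.2 (by omega)
  obtain ⟨M, rfl⟩ := exists_eq_add_indicator_Ici_of_iotaWord_eq_add_one hcontig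
  rw [grayWord_add, grayWord_indicator_Ici, ← Finset.card_singleton M]
  congr 1
  ext j
  simp only [Finset.mem_filter, Finset.mem_univ, true_and, Finset.mem_singleton, Pi.add_apply,
    ne_eq, left_eq_add, Pi.single_apply, ite_eq_right_iff, hone, imp_false, not_not]

/-- If `w, v` are contiguous words under the natural enumeration, i.e. `ι(v) = ι(w) + 1`,
then the Gray codes `g(w)` and `g(v)` differ in exactly one position. -/
theorem grayWord_contiguous_differ_one (c n : ℕ) (hc : 2 ≤ c) (hn : 1 ≤ n)
    (w v : Fin n → Fin c) (hcontig : iotaWord v = iotaWord w + 1) :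
    (Finset.univ.filter fun j : Fin n => grayWord w j ≠ grayWord v j).card = 1 :=
  grayWord_contiguous_differ_one_general c n hc w v hcontig
end
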